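/- arXiv:2306.04432 — 10 statements merged into one kernel-verified Lean document; each statement's English description precedes it below -/
import Mathlib

section
/- Let C and D be categories, F : C → D a functor, κ a cardinal, and suppose C has products indexed by sets of cardinality κ, and |Hom_D(F(c'), F(c))| ≤ κ for all objects c', c of C. Then for any two parallel morphisms f, g : c' → c in C, we have F(f) = F(g). -/
open CategoryTheory CategoryTheory.Limits

universe w v₁ v₂ u₁ u₂

theorem stmt_0 {C : Type u₁} [Category.{v₁} C] {D : Type u₂} [Category.{v₂} D]
    (F : C ⥤ D) (κ : Cardinal.{w})
    (hprod : ∀ J : Type w, Cardinal.mk J = κ → HasProductsOfShape J C)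
    (hhom : ∀ c' c : C,
      Cardinal.lift.{w} (Cardinal.mk (F.obj c' ⟶ F.obj c)) ≤ Cardinal.lift.{v₂} κ)
    {c' c : C} (f g : c' ⟶ c) : F.map f = F.map g := by
  classical
  by_contra hne
  obtain ⟨J, hJ⟩ : ∃ J : Type w, Cardinal.mk J = κ := ⟨κ.out, Cardinal.mk_out κ⟩
  haveI := hprod J hJ
  set P := ∏ᶜ (fun _ : J => c) with hP
  let h : Set J → (c' ⟶ P) := fun S => Pi.lift (fun j => if j ∈ S then f else g)
  have hinj : Function.Injective (fun S => F.map (h S)) := by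
    intro S T hST
    ext j
    have key : F.map (if j ∈ S then f else g) = F.map (if j ∈ T then f else g) := by
      have hS : F.map (h S) ≫ F.map (Pi.π (fun _ : J => c) j)
          = F.map (if j ∈ S then f else g) := by
        rw [← F.map_comp]; simp [h]
      have hT : F.map (h T) ≫ F.map (Pi.π (fun _ : J => c) j)
          = F.map (if j ∈ T then f else g) := by
        rw [← F.map_comp]; simp [h]
      dsimp only at hST
      rw [← hS, ← hT, hST]
    by_cases hjS : j ∈ S <;> by_cases hjT : j ∈ T <;> simp [hjS, hjT] at key ⊢
    · exact hne key
    · exact hne key.symm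
  have h1 : Cardinal.lift.{v₂} (Cardinal.mk (Set J))
      ≤ Cardinal.lift.{w} (Cardinal.mk (F.obj c' ⟶ F.obj P)) :=
    Cardinal.lift_mk_le'.mpr ⟨⟨_, hinj⟩⟩
  have h2 := hhom c' P
  have h3 : Cardinal.lift.{v₂} (Cardinal.mk (Set J)) ≤ Cardinal.lift.{v₂} κ :=
    h1.trans h2
  have h4 : Cardinal.mk (Set J) ≤ κ := Cardinal.lift_le.mp h3
  rw [Cardinal.mk_set, ← hJ] at h4
  exact absurd h4 (not_le.mpr (Cardinal.cantor _))
end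

section
/- Let C be a category with small products, D an essentially small category, and F : C → D a functor. Then for any two parallel morphisms f, g : c' → c in C, F(f) = F(g). -/
open CategoryTheory CategoryTheory.Limits

universe w v₁ v₂ u₁ u₂

theorem stmt_2 {C : Type u₁} [Category.{v₁} C] {D : Type u₂} [Category.{v₂} D]
    [HasProducts.{w} C] [EssentiallySmall.{w} D]
    (F : C ⥤ D) {c' c : C} (f g : c' ⟶ c) : F.map f = F.map g := by
  classical
  by_contra hfg
  let e := equivSmallModel.{w} D
  let md := Σ Z W : SmallModel.{w} D, Z ⟶ W
  let α := Cardinal.mk md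
  let P : C := ∏ᶜ fun _ : md => c
  -- the map from subsets of md to morphisms
  let h : Set md → (c' ⟶ P) := fun S => Pi.lift (fun k => if k ∈ S then f else g)
  let ψ : Set md → md := fun S =>
    ⟨e.functor.obj (F.obj c'), e.functor.obj (F.obj P), e.functor.map (F.map (h S))⟩
  have hinj : Function.Injective ψ := by
    intro S T hST
    have h1 : e.functor.map (F.map (h S)) = e.functor.map (F.map (h T)) := by
      simp only [ψ] at hST
      rw [Sigma.mk.inj_iff] at hST
      have h2' := eq_of_heq hST.2
      rw [Sigma.mk.inj_iff] at h2'
      exact eq_of_heq h2'.2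
    have h2 : F.map (h S) = F.map (h T) := e.functor.map_injective h1
    ext k
    have h3 : F.map (h S) ≫ F.map (Pi.π (fun _ : md => c) k)
        = F.map (h T) ≫ F.map (Pi.π (fun _ : md => c) k) := by rw [h2]
    rw [← F.map_comp, ← F.map_comp] at h3
    simp only [h, Pi.lift_π] at h3
    constructor
    · intro hk
      by_contra hk'
      rw [if_pos hk, if_neg hk'] at h3
      exact hfg h3
    · intro hk
      by_contra hk'
      rw [if_neg hk', if_pos hk] at h3
      exact hfg h3.symm
  have := Cardinal.mk_le_of_injective hinj
  rw [Cardinal.mk_set] at this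
  exact absurd this (not_le_of_gt (Cardinal.cantor α))
end

section
/- Let C be a strongly connected category with small products and D an essentially small category. Then any functor C → D is isomorphic to a constant functor. -/
open CategoryTheory CategoryTheory.Limits

universe w v₁ v₂ u₁ u₂

lemma stmt_4_key {C : Type u₁} [Category.{v₁} C] {D : Type u₂} [Category.{v₂} D]
    [HasProducts.{w} C] [EssentiallySmall.{w} D]
    (F : C ⥤ D) {c c' : C} (f g : c ⟶ c') : F.map f = F.map g := by
  classical
  by_contra hne
  set K : Type w := Σ a b : SmallModel D, a ⟶ b with hK
  let e := equivSmallModel.{w} D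
  let P : C := ∏ᶜ (fun _ : K => c')
  -- injective map from sets of K into Hom(F c, F P)
  let h : (K → Prop) → (c ⟶ P) := fun S => Pi.lift (fun k => if S k then f else g)
  have hinj : Function.Injective (fun S : K → Prop => F.map (h S)) := by
    intro S S' hSS'
    funext k
    simp only at hSS'
    have h1 : F.map (h S ≫ Pi.π _ k) = F.map (h S' ≫ Pi.π _ k) := by
      rw [F.map_comp, F.map_comp, hSS']
    simp only [h, Pi.lift_π] at h1
    by_cases hS : S k <;> by_cases hS' : S' k <;>
      simp only [hS, hS', if_true, if_false, if_pos, if_neg, eq_iff_iff] <;>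
      simp_all
  let j : (F.obj c ⟶ F.obj P) → K := fun φ =>
    ⟨e.functor.obj (F.obj c), e.functor.obj (F.obj P), e.functor.map φ⟩
  have hjinj : Function.Injective j := by
    intro φ ψ hφψ
    apply e.functor.map_injective
    simp only [j] at hφψ
    injection hφψ with h1 h2
    injection h2 with h3 h4
  exact Function.cantor_injective (fun S : Set K => j (F.map (h S)))
    (hjinj.comp hinj)

theorem stmt_4 {C : Type u₁} [Category.{v₁} C] {D : Type u₂} [Category.{v₂} D]
    [HasProducts.{w} C] [EssentiallySmall.{w} D]
    (hconn : ∀ c c' : C, Nonempty (c ⟶ c'))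
    (F : C ⥤ D) : ∃ d : D, Nonempty (F ≅ (Functor.const C).obj d) := by
  let c₀ : C := ∏ᶜ (fun x : PEmpty.{w+1} => x.elim)
  refine ⟨F.obj c₀, ⟨NatIso.ofComponents (fun c =>
    { hom := F.map (hconn c c₀).some
      inv := F.map (hconn c₀ c).some
      hom_inv_id := by
        rw [← F.map_comp, stmt_4_key F _ (𝟙 c), F.map_id]
      inv_hom_id := by
        rw [← F.map_comp, stmt_4_key F _ (𝟙 c₀), F.map_id]; rfl }) (fun {c c'} φ => ?_)⟩⟩
  simp only [Functor.const_obj_obj, Functor.const_obj_map, Category.comp_id]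
  rw [← F.map_comp, stmt_4_key F _ (hconn c c₀).some]
end

section
/- Any functor from the category of groups to the category of finite groups is isomorphic to a constant functor. -/
/-!
Finite groups are Dedekind-finite: if `a ≫ b = 𝟙` for endomorphisms of a finite group, then also
`b ≫ a = 𝟙`. Hence `F` sends to the identity every idempotent `t ≫ s` of a group with `s ≫ t = 𝟙`,
such as the endomorphism `(x₀, x₁, …) ↦ (1, x₁, …)` of `G^ℕ` (shift left, then shift right).
The trivial endomorphism of `G` factors through it via `G → G^ℕ → G`, `x ↦ (x, 1, 1, …)` and
evaluation at `0`, so `F` sends it to the identity as well. Thus the maps induced by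
`G → 1 → G` and `1 → G → 1` identify `F G` naturally with `F 1`.
-/

open CategoryTheory Limits

universe u

theorem Function.LeftInverse.rightInverse_of_finite {α : Type*} [Finite α] {f g : α → α}
    (h : Function.LeftInverse f g) : Function.RightInverse f g :=
  h.rightInverse_of_injective (Finite.injective_iff_surjective.mpr h.surjective)

theorem finGrp_comp_eq_id_symm
    {X : ObjectProperty.FullSubcategory (fun G : GrpCat.{u} => Finite G)} {a b : X ⟶ X}
    (h : a ≫ b = 𝟙 X) : b ≫ a = 𝟙 X := by
  have : Finite X.obj := X.property
  ext1
  ext x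
  exact Function.LeftInverse.rightInverse_of_finite (f := b.hom) (g := a.hom)
    (fun y => ConcreteCategory.congr_hom (congrArg InducedCategory.Hom.hom h) y) x

namespace CategoryTheory.Functor

variable {C D : Type*} [Category C] [Category D]

theorem map_comp_eq_id_of_comp_eq_id (F : C ⥤ D)
    (hD : ∀ (Y : D) (a b : Y ⟶ Y), a ≫ b = 𝟙 Y → b ≫ a = 𝟙 Y)
    {X : C} {s t : X ⟶ X} (h : s ≫ t = 𝟙 X) : F.map (t ≫ s) = 𝟙 (F.obj X) := by
  rw [F.map_comp]
  exact hD _ _ _ (by rw [← F.map_comp, h, F.map_id])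

noncomputable def isoConstOfIsZero (F : C ⥤ D) {Z : C} (hZ : IsZero Z)
    (h : ∀ X, F.map (hZ.from_ X ≫ hZ.to_ X) = 𝟙 (F.obj X)) :
    F ≅ (Functor.const C).obj (F.obj Z) :=
  NatIso.ofComponents
    (fun X => ⟨F.map (hZ.from_ X), F.map (hZ.to_ X), by rw [← F.map_comp, h],
      by rw [← F.map_comp, hZ.eq_of_src (hZ.to_ X ≫ hZ.from_ X) (𝟙 Z), F.map_id]; rfl⟩)
    (fun f => by
      rw [← F.map_comp, hZ.eq_of_tgt (_ ≫ hZ.from_ _) (hZ.from_ _)]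
      exact (Category.comp_id _).symm)

end CategoryTheory.Functor

section SeqShift

variable (G : Type u) [Group G]

def seqShiftLeft : (ℕ → G) →* (ℕ → G) where
  toFun x n := x (n + 1)
  map_one' := rfl
  map_mul' _ _ := rfl

def seqShiftRight : (ℕ → G) →* (ℕ → G) where
  toFun x
    | 0 => 1
    | n + 1 => x n
  map_one' := by funext n; cases n <;> rfl
  map_mul' x y := by funext n; cases n <;> simp

theorem seqShiftLeft_comp_seqShiftRight :
    (seqShiftLeft G).comp (seqShiftRight G) = MonoidHom.id _ := rfl

theorem seqShiftLeft_comp_mulSingle_zero :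
    (seqShiftLeft G).comp (MonoidHom.mulSingle (fun _ : ℕ => G) 0) = 1 := by
  ext x n
  simp [seqShiftLeft]

end SeqShift

theorem GrpCat.map_ofHom_one_eq_id
    (F : GrpCat.{u} ⥤ ObjectProperty.FullSubcategory (fun G : GrpCat.{u} => Finite G))
    (G : GrpCat.{u}) : F.map (GrpCat.ofHom (1 : G →* G)) = 𝟙 (F.obj G) := by
  let incl : G ⟶ GrpCat.of (ℕ → G) := GrpCat.ofHom (MonoidHom.mulSingle (fun _ : ℕ => G) 0)
  let eval : GrpCat.of (ℕ → G) ⟶ G := GrpCat.ofHom (Pi.evalMonoidHom (fun _ : ℕ => G) 0)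
  let shiftL := GrpCat.ofHom (seqShiftLeft G)
  let shiftR := GrpCat.ofHom (seqShiftRight G)
  have hretract : incl ≫ eval = 𝟙 G := by ext; simp [incl, eval]
  have hshift : shiftR ≫ shiftL = 𝟙 _ := by ext1; exact seqShiftLeft_comp_seqShiftRight G
  have hfactor : GrpCat.ofHom (1 : G →* G) = incl ≫ (shiftL ≫ shiftR) ≫ eval := by
    ext1
    simp only [GrpCat.hom_comp, GrpCat.hom_ofHom, MonoidHom.comp_assoc, incl, shiftL, shiftR,
      eval, seqShiftLeft_comp_mulSingle_zero, MonoidHom.comp_one]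
  rw [hfactor, F.map_comp, F.map_comp,
    F.map_comp_eq_id_of_comp_eq_id (fun _ _ _ => finGrp_comp_eq_id_symm) hshift,
    Category.id_comp, ← F.map_comp, hretract, F.map_id]

theorem stmt_5 (F : GrpCat.{u} ⥤ ObjectProperty.FullSubcategory (fun G : GrpCat.{u} => Finite G)) :
    ∃ d, Nonempty (F ≅ (Functor.const GrpCat.{u}).obj d) := by
  have hZ : IsZero (GrpCat.of PUnit.{u + 1}) := GrpCat.isZero_of_subsingleton _
  refine ⟨_, ⟨F.isoConstOfIsZero hZ fun G => ?_⟩⟩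
  have htrivial : hZ.from_ G ≫ hZ.to_ G = GrpCat.ofHom 1 := by
    ext x
    exact map_one (hZ.to_ G).hom
  rw [htrivial, GrpCat.map_ofHom_one_eq_id]
end

section
/- Any functor from the category of countable groups to the category of finitely generated groups is isomorphic to a constant functor. -/
/-!
Let `X` be a countable group and `T` the free product of countably many copies of `X`, with
inclusions `ιₙ`. Every `e : ℕ → ℕ` gives an endomorphism `σₑ` of `T` with `ιₙ ≫ σₑ = ι_{e n}`.
A functor `F` into finitely generated groups has countable `End (F T)`, while there are
uncountably many `e`, so `F σₑ = F σₑ'` for some `e ≠ e'`, hence `F ι_i = F ι_j` for some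
`i ≠ j`. Any two maps `f g : X ⟶ Y` factor through `T` as `ι_i ≫ h` and `ι_j ≫ h`, so
`F f = F g`. A functor identifying all parallel morphisms is isomorphic to the constant functor
at its value on the trivial group.
-/

open CategoryTheory

universe u v

open Cardinal in
instance Pi.uncountable_of_infinite {α : Type u} {β : Type v} [Infinite α] [Nontrivial β] :
    Uncountable (α → β) := by
  rw [← aleph0_lt_mk_iff, mk_arrow]
  calc ℵ₀ ≤ lift #α := aleph0_le_lift.mpr (aleph0_le_mk α)
    _ < 2 ^ lift #α := cantor _
    _ ≤ lift #β ^ lift #α :=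
      power_le_power_right (by simpa [two_le_iff] using exists_pair_ne β)

lemma Monoid.countable_of_fg (M : Type*) [Monoid M] [Monoid.FG M] : Countable M := by
  obtain ⟨α, _, φ, hφ⟩ := Monoid.fg_iff_exists_freeGroup_hom_surjective_finite.mp ‹_›
  exact hφ.countable

instance MonoidHom.countable_of_fg {M N : Type*} [Monoid M] [Monoid N] [Monoid.FG M]
    [Countable N] : Countable (M →* N) := by
  obtain ⟨S, hS⟩ := ‹Monoid.FG M›.fg_top
  refine Function.Injective.countable (f := fun (f : M →* N) (s : (S : Set M)) => f s) ?_
  intro f g hfg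
  exact MonoidHom.eq_of_eqOn_denseM hS fun s hs => congrFun hfg ⟨s, hs⟩

instance Monoid.CoprodI.countable {ι : Type*} [Countable ι] (M : ι → Type*)
    [∀ i, Monoid (M i)] [∀ i, Countable (M i)] : Countable (Monoid.CoprodI M) :=
  Con.mk'_surjective.countable

namespace CategoryTheory.Functor

variable {C D : Type*} [Category C] [Category D] (F : C ⥤ D)

lemma exists_ne_map_eq_of_countable_end {I : Type*} [Infinite I] {X T : C}
    [Countable (F.obj T ⟶ F.obj T)] (ι : I → (X ⟶ T)) (σ : (I → I) → (T ⟶ T))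
    (hσ : ∀ e i, ι i ≫ σ e = ι (e i)) : ∃ i j, i ≠ j ∧ F.map (ι i) = F.map (ι j) := by
  obtain ⟨e, e', hFe, he⟩ := Function.not_injective_iff.mp
    (not_injective_uncountable_countable fun e => F.map (σ e))
  obtain ⟨i, hi⟩ := Function.ne_iff.mp he
  refine ⟨e i, e' i, hi, ?_⟩
  rw [← hσ, ← hσ, F.map_comp, F.map_comp, hFe]

lemma map_eq_of_countable_end {I : Type*} [Infinite I] {X Y T : C}
    [Countable (F.obj T ⟶ F.obj T)] (ι : I → (X ⟶ T)) (σ : (I → I) → (T ⟶ T))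
    (hσ : ∀ e i, ι i ≫ σ e = ι (e i)) (f g : X ⟶ Y)
    (hfactor : ∀ i j, i ≠ j → ∃ h : T ⟶ Y, ι i ≫ h = f ∧ ι j ≫ h = g) :
    F.map f = F.map g := by
  obtain ⟨i, j, hij, hF⟩ := F.exists_ne_map_eq_of_countable_end ι σ hσ
  obtain ⟨h, rfl, rfl⟩ := hfactor i j hij
  rw [F.map_comp, F.map_comp, hF]

lemma nonempty_iso_const_of_map_eq (Z : C) (hto : ∀ X, Nonempty (X ⟶ Z))
    (hfrom : ∀ X, Nonempty (Z ⟶ X)) (hF : ∀ {X Y : C} (f g : X ⟶ Y), F.map f = F.map g) :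
    Nonempty (F ≅ (const C).obj (F.obj Z)) :=
  ⟨NatIso.ofComponents
    (fun X =>
      { hom := F.map (hto X).some
        inv := F.map (hfrom X).some
        hom_inv_id := by rw [← F.map_comp, hF _ (𝟙 X), F.map_id]
        inv_hom_id := by rw [← F.map_comp, hF _ (𝟙 Z), F.map_id]; rfl })
    fun f => by simpa using hF (f ≫ (hto _).some) (hto _).some⟩

end CategoryTheory.Functor

lemma ObjectProperty.homMk_ofHom_comp {P : ObjectProperty GrpCat.{u}} {X Y Z : P.FullSubcategory}
    (φ : X.obj →* Y.obj) (ψ : Y.obj →* Z.obj) :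
    ObjectProperty.homMk (GrpCat.ofHom φ) ≫ ObjectProperty.homMk (GrpCat.ofHom ψ) =
      ObjectProperty.homMk (GrpCat.ofHom (ψ.comp φ)) :=
  rfl

abbrev CountableGrpCat := ObjectProperty.FullSubcategory (fun G : GrpCat.{u} => Countable G)

abbrev FGGrpCat := ObjectProperty.FullSubcategory (fun G : GrpCat.{u} => Group.FG G)

instance (X Y : FGGrpCat.{u}) : Countable (X ⟶ Y) := by
  have : Group.FG X.obj := X.property
  have : Countable Y.obj := have : Group.FG Y.obj := Y.property; Monoid.countable_of_fg _
  exact Function.Injective.countable (f := fun φ : X ⟶ Y => φ.hom.hom)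
    fun φ ψ h => ObjectProperty.hom_ext _ (GrpCat.hom_ext h)

lemma CountableGrpCat.map_eq {D : Type*} [Category D] (F : CountableGrpCat.{u} ⥤ D)
    [∀ X, Countable (F.obj X ⟶ F.obj X)] {X Y : CountableGrpCat.{u}} (f g : X ⟶ Y) :
    F.map f = F.map g := by
  have : Countable X.obj := X.property
  let T : CountableGrpCat.{u} := ⟨GrpCat.of (Monoid.CoprodI fun _ : ℕ => X.obj), inferInstance⟩
  let of (i : ℕ) : X.obj →* Monoid.CoprodI fun _ : ℕ => X.obj :=
    Monoid.CoprodI.of (M := fun _ : ℕ => X.obj) (i := i)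
  refine F.map_eq_of_countable_end (T := T) (fun i => ObjectProperty.homMk (GrpCat.ofHom (of i)))
    (fun e => ObjectProperty.homMk (GrpCat.ofHom (Monoid.CoprodI.lift fun i => of (e i))))
    (fun e i => by rw [ObjectProperty.homMk_ofHom_comp, Monoid.CoprodI.lift_comp_of]) f g ?_
  intro i j hij
  refine ⟨ObjectProperty.homMk (GrpCat.ofHom
    (Monoid.CoprodI.lift fun k => if k = i then f.hom.hom else g.hom.hom)), ?_, ?_⟩
  · rw [ObjectProperty.homMk_ofHom_comp, Monoid.CoprodI.lift_comp_of, if_pos rfl]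
    rfl
  · rw [ObjectProperty.homMk_ofHom_comp, Monoid.CoprodI.lift_comp_of, if_neg hij.symm]
    rfl

theorem stmt_6
    (F : ObjectProperty.FullSubcategory (fun G : GrpCat.{u} => Countable G) ⥤
         ObjectProperty.FullSubcategory (fun G : GrpCat.{u} => Group.FG G)) :
    ∃ d, Nonempty (F ≅ (Functor.const (ObjectProperty.FullSubcategory (fun G : GrpCat.{u} => Countable G))).obj d) := by
  let trivialGrp : CountableGrpCat.{u} := ⟨GrpCat.of PUnit, inferInstance⟩
  exact ⟨_, F.nonempty_iso_const_of_map_eq trivialGrp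
    (fun _ => ⟨ObjectProperty.homMk (GrpCat.ofHom 1)⟩)
    (fun _ => ⟨ObjectProperty.homMk (GrpCat.ofHom 1)⟩) (CountableGrpCat.map_eq F)⟩
end

section
/- Let κ and κ' be cardinals with κ infinite and κ ≥ 2^{κ'}. Then any functor from the category of pointed sets of cardinality at most κ to the category of pointed sets of cardinality at most κ' is isomorphic to a constant functor. -/
/-!
Let `F` be such a functor. Every endomorphism of a pointed set `A` that factors through the
one-point set is sent to the identity: take the wedge `W` of `κ` copies of `A`, with inclusions
`e i : A ⟶ W` and, for every `S ⊆ κ`, the map `χ S : W ⟶ A` collapsing the copies outside `S`.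
Then `e i ≫ χ S` is `𝟙 A` for `i ∈ S` and the constant map otherwise. There are `2 ^ κ` maps
`χ S` but at most `κ' ^ κ' ≤ κ` morphisms `F W ⟶ F A`, so `F (χ S) = F (χ T)` for some
`S ≠ T`, and an index in their symmetric difference shows that `F` identifies the constant map
with `𝟙`. Hence `F A ≅ F pt` naturally in `A`.
-/

open CategoryTheory Cardinal Limits

universe u v

namespace CategoryTheory.Functor

variable {C : Type*} [Category C] {D : Type*} [Category.{v} D] (F : C ⥤ D)

theorem map_eq_id_of_mk_hom_lt {ι : Type v} {A W : C} (z : A ⟶ A) (e : ι → (A ⟶ W))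
    (χ : Set ι → (W ⟶ A)) (he_mem : ∀ S, ∀ i ∈ S, e i ≫ χ S = 𝟙 A)
    (he_notMem : ∀ S, ∀ i ∉ S, e i ≫ χ S = z)
    (hcard : #(F.obj W ⟶ F.obj A) < #(Set ι)) : F.map z = 𝟙 (F.obj A) := by
  have separate : ∀ S T i, i ∈ S → i ∉ T → F.map (χ S) = F.map (χ T) → F.map z = 𝟙 _ := by
    intro S T i hS hT hST
    calc F.map z = F.map (e i) ≫ F.map (χ T) := by rw [← F.map_comp, he_notMem T i hT]
      _ = F.map (e i) ≫ F.map (χ S) := by rw [hST]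
      _ = 𝟙 _ := by rw [← F.map_comp, he_mem S i hS, F.map_id]
  obtain ⟨S, T, hST, hne⟩ := Function.not_injective_iff.mp
    fun hinj => (mk_le_of_injective hinj).not_gt hcard
  obtain ⟨i, hi⟩ := not_forall.mp (mt Set.ext hne)
  by_cases hS : i ∈ S
  · exact separate S T i hS (fun hT => hi (iff_of_true hS hT)) hST
  · exact separate T S i (not_not.mp fun hT => hi (iff_of_false hS hT)) hS hST.symm

def isoConstOfMapEqId {Z : C} (hZ : IsTerminal Z) (s : ∀ A, Z ⟶ A)
    (h : ∀ A, F.map (hZ.from A ≫ s A) = 𝟙 (F.obj A)) : F ≅ (const C).obj (F.obj Z) :=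
  NatIso.ofComponents
    (fun A =>
      { hom := F.map (hZ.from A)
        inv := F.map (s A)
        hom_inv_id := by rw [← F.map_comp, h]
        inv_hom_id := by rw [← F.map_comp, hZ.hom_ext (s A ≫ hZ.from A) (𝟙 Z), F.map_id]; rfl })
    (fun {A B} f => by
      dsimp
      rw [← F.map_comp, hZ.hom_ext (f ≫ hZ.from B) (hZ.from A), Category.comp_id])

end CategoryTheory.Functor

namespace Pointed

theorem mk_hom_le (A B : Pointed.{u}) : #(A ⟶ B) ≤ #B ^ #A := by
  rw [power_def]
  exact mk_le_of_injective fun _ _ => Pointed.Hom.ext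

def zeroHom (A B : Pointed.{u}) : A ⟶ B := ⟨fun _ => B.point, rfl⟩

/-- The wedge sum of `ι` copies of `X`: the copies of `X` glued along their base points. -/
def wedge (ι : Type u) (X : Pointed.{u}) : Pointed.{u} :=
  typeToPointed.obj (ι × {x : X // x ≠ X.point})

section wedge

variable {ι : Type u} {X : Pointed.{u}}

open scoped Classical in
noncomputable def wedgeIncl (i : ι) : X ⟶ wedge ι X :=
  ⟨fun x => if hx : x = X.point then none else some (i, ⟨x, hx⟩), dif_pos rfl⟩

open scoped Classical in
noncomputable def wedgeCollapse (S : Set ι) : wedge ι X ⟶ X :=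
  ⟨fun w => w.elim X.point fun p => if p.1 ∈ S then p.2 else X.point, rfl⟩

theorem wedgeIncl_comp_wedgeCollapse_of_mem {S : Set ι} {i : ι} (hi : i ∈ S) :
    wedgeIncl i ≫ wedgeCollapse S = 𝟙 X := by
  refine Pointed.Hom.ext (funext fun x => ?_)
  by_cases hx : x = X.point <;> simp [wedgeIncl, wedgeCollapse, hx, hi]

theorem wedgeIncl_comp_wedgeCollapse_of_notMem {S : Set ι} {i : ι} (hi : i ∉ S) :
    wedgeIncl i ≫ wedgeCollapse S = zeroHom X X := by
  refine Pointed.Hom.ext (funext fun x => ?_)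
  by_cases hx : x = X.point <;> simp [wedgeIncl, wedgeCollapse, zeroHom, hx, hi]

theorem mk_wedge_le {κ : Cardinal.{u}} (hκ : ℵ₀ ≤ κ) (hι : #ι ≤ κ) (hX : #X ≤ κ) :
    #(wedge ι X) ≤ κ := by
  have hprod : #(ι × {x : X // x ≠ X.point}) ≤ κ := by
    rw [mk_prod, lift_id, lift_id, ← mul_eq_self hκ]
    exact mul_le_mul' hι ((mk_subtype_le _).trans hX)
  calc #(wedge ι X) = #(ι × {x : X // x ≠ X.point}) + 1 := mk_option
    _ ≤ κ + 1 := add_le_add_left hprod 1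
    _ = κ := add_one_eq hκ

end wedge

end Pointed

theorem Cardinal.power_self_le_of_two_power_le {κ κ' : Cardinal.{u}} (hκ : ℵ₀ ≤ κ)
    (h : 2 ^ κ' ≤ κ) : κ' ^ κ' ≤ κ := by
  rcases lt_or_ge κ' ℵ₀ with hfin | hinf
  · exact (power_lt_aleph0 hfin hfin).le.trans hκ
  · rwa [power_self_eq hinf]

abbrev PointedCardLE (κ : Cardinal.{u}) :=
  ObjectProperty.FullSubcategory fun X : Pointed.{u} => #X.X ≤ κ

namespace PointedCardLE

variable {κ : Cardinal.{u}}

theorem mk_hom_le (X Y : PointedCardLE κ) : #(X ⟶ Y) ≤ κ ^ κ := by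
  have hY : #Y.obj ≠ 0 := mk_ne_zero_iff.mpr ⟨Y.obj.point⟩
  calc #(X ⟶ Y) ≤ #(X.obj ⟶ Y.obj) := mk_le_of_injective fun _ _ => ObjectProperty.hom_ext _
    _ ≤ #Y.obj ^ #X.obj := Pointed.mk_hom_le _ _
    _ ≤ #Y.obj ^ κ := power_le_power_left hY X.property
    _ ≤ κ ^ κ := power_le_power_right Y.property

def unit (hκ : 1 ≤ κ) : PointedCardLE κ :=
  ⟨Pointed.of PUnit.unit, by simpa using hκ⟩

def isTerminalUnit (hκ : 1 ≤ κ) : IsTerminal (unit hκ) :=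
  IsTerminal.ofUniqueHom (fun _ => ObjectProperty.homMk ⟨fun _ => PUnit.unit, rfl⟩)
    fun _ _ => ObjectProperty.hom_ext _ (Pointed.Hom.ext rfl)

def fromUnit (hκ : 1 ≤ κ) (A : PointedCardLE κ) : unit hκ ⟶ A :=
  ObjectProperty.homMk ⟨fun _ => A.obj.point, rfl⟩

theorem map_zeroHom_eq_id {D : Type*} [Category.{u} D] (hκ : ℵ₀ ≤ κ) (F : PointedCardLE κ ⥤ D)
    (hF : ∀ X Y, #(F.obj X ⟶ F.obj Y) ≤ κ) (A : PointedCardLE κ) :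
    F.map (ObjectProperty.homMk (Pointed.zeroHom A.obj A.obj)) = 𝟙 (F.obj A) := by
  let W : PointedCardLE κ :=
    ⟨Pointed.wedge κ.out A.obj, Pointed.mk_wedge_le hκ (mk_out κ).le A.property⟩
  refine F.map_eq_id_of_mk_hom_lt _ (W := W) (fun i => ObjectProperty.homMk (Pointed.wedgeIncl i))
    (fun S => ObjectProperty.homMk (Pointed.wedgeCollapse S)) (fun S i hi => ?_)
    (fun S i hi => ?_) ?_
  · exact ObjectProperty.hom_ext _ (Pointed.wedgeIncl_comp_wedgeCollapse_of_mem hi)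
  · exact ObjectProperty.hom_ext _ (Pointed.wedgeIncl_comp_wedgeCollapse_of_notMem hi)
  · rw [mk_set, mk_out]
    exact (hF W A).trans_lt (cantor κ)

end PointedCardLE

theorem stmt_8 (κ κ' : Cardinal.{u}) (hκ : Cardinal.aleph0 ≤ κ) (h : 2 ^ κ' ≤ κ)
    (F : ObjectProperty.FullSubcategory (fun X : Pointed.{u} => Cardinal.mk X.X ≤ κ) ⥤
         ObjectProperty.FullSubcategory (fun X : Pointed.{u} => Cardinal.mk X.X ≤ κ')) :
    ∃ d, Nonempty (F ≅
      (Functor.const (ObjectProperty.FullSubcategory (fun X : Pointed.{u} => Cardinal.mk X.X ≤ κ))).obj d) := by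
  have hκ_one : 1 ≤ κ := one_le_aleph0.trans hκ
  have hF (X Y) : #(F.obj X ⟶ F.obj Y) ≤ κ :=
    (PointedCardLE.mk_hom_le _ _).trans (power_self_le_of_two_power_le hκ h)
  exact ⟨_, ⟨F.isoConstOfMapEqId (PointedCardLE.isTerminalUnit hκ_one)
    (PointedCardLE.fromUnit hκ_one) (PointedCardLE.map_zeroHom_eq_id hκ F hF)⟩⟩
end

section
/- For every natural number n ≥ 2 there exists a functor F from the category of nonempty sets of cardinality at most n to the category of nonempty sets of cardinality at most 2 that is not isomorphic to any constant functor. -/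
/-!
Among maps between nonempty sets of size at most `n`, the class `W` of bijections out of an
`n`-element set satisfies `W (f ≫ g) ↔ W f ∧ W g`: if `g ∘ f` is such a bijection, then `f` is
injective, so its target also has `n` elements and both factors are bijections. Any such class
yields a functor `X ↦ {p : Prop // p → W (𝟙 X)}`, with `f` acting by `p ↦ p ∧ W f`. It takes two
values on `n`-element sets but only one on smaller sets, so that their identities are sent to
identities. It sends a constant endomorphism of `Fin n` to a map other than the identity, whereas
a functor isomorphic to a constant one sends every endomorphism to the identity.
-/

open CategoryTheory Cardinal

universe u v

theorem Function.Bijective.of_comp_of_mk_le {X Y : Type u} {Z : Type v} [Finite Y]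
    {f : X → Y} {g : Y → Z} (h : (g ∘ f).Bijective) (hYX : #Y ≤ #X) :
    f.Bijective ∧ g.Bijective := by
  have : Finite X := .of_injective f h.injective.of_comp
  have hf : f.Bijective := h.injective.of_comp.bijective_of_nat_card_le
    (toNat_le_toNat hYX (lt_aleph0_of_finite X))
  exact ⟨hf, (Function.Bijective.of_comp_iff g hf).1 h⟩

namespace CategoryTheory

theorem Functor.map_eq_id_of_iso_const {C D : Type*} [Category C] [Category D] {F : C ⥤ D}
    {d : D} (e : F ≅ (Functor.const C).obj d) {X : C} (f : X ⟶ X) : F.map f = 𝟙 (F.obj X) := by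
  rw [← cancel_mono (e.hom.app X), e.hom.naturality]
  simp

namespace MorphismProperty

variable {C : Type*} [Category C] (W : MorphismProperty C)
  (hW : ∀ {X Y Z : C} (f : X ⟶ Y) (g : Y ⟶ Z), W (f ≫ g) ↔ W f ∧ W g)

def propFunctor : C ⥤ Type where
  obj X := {p : Prop // p → W (𝟙 X)}
  map {X Y} f := TypeCat.ofHom fun p =>
    ⟨p.1 ∧ W f, fun h => ((hW f (𝟙 Y)).1 (by simpa using h.2)).2⟩
  map_id X := by
    ext ⟨p, hp⟩
    simpa using hp
  map_comp f g := by
    ext ⟨p, hp⟩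
    simp [hW, and_assoc]

theorem mk_propFunctor_obj_le_two (X : C) : #((propFunctor W hW).obj X) ≤ 2 :=
  mk_Prop ▸ mk_subtype_le _

theorem propFunctor_map_ne_id {X : C} (hX : W (𝟙 X)) {f : X ⟶ X} (hf : ¬ W f) :
    (propFunctor W hW).map f ≠ 𝟙 _ := by
  intro h
  have := congrArg Subtype.val (ConcreteCategory.congr_hom h ⟨True, fun _ => hX⟩)
  exact hf (of_eq_true (p := True ∧ W f) this).2

end MorphismProperty

end CategoryTheory

abbrev SetsCardLE (n : ℕ) := ObjectProperty.FullSubcategory (fun X : Type => Nonempty X ∧ #X ≤ n)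

def bijectiveFromCard (n : ℕ) : MorphismProperty (SetsCardLE n) :=
  fun X _ f => #X.obj = n ∧ Function.Bijective f.hom

theorem bijectiveFromCard_comp_iff {n : ℕ} {X Y Z : SetsCardLE n} (f : X ⟶ Y) (g : Y ⟶ Z) :
    bijectiveFromCard n (f ≫ g) ↔ bijectiveFromCard n f ∧ bijectiveFromCard n g := by
  refine ⟨fun ⟨hX, hfg⟩ => ?_, fun ⟨⟨hX, hf⟩, _, hg⟩ => ⟨hX, hg.comp hf⟩⟩
  have : Finite Y.obj := lt_aleph0_iff_finite.1 (Y.property.2.trans_lt natCast_lt_aleph0)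
  obtain ⟨hf, hg⟩ := Function.Bijective.of_comp_of_mk_le (f := f.hom) (g := g.hom) hfg
    (Y.property.2.trans hX.ge)
  exact ⟨⟨hX, hf⟩, (mk_congr (Equiv.ofBijective _ hf)).symm.trans hX, hg⟩

noncomputable def bijectiveFromCardFunctor (n : ℕ) :
    SetsCardLE n ⥤ ObjectProperty.FullSubcategory (fun X : Type => Nonempty X ∧ #X ≤ 2) :=
  ObjectProperty.lift _ ((bijectiveFromCard n).propFunctor bijectiveFromCard_comp_iff)
    fun _ => ⟨⟨⟨False, False.elim⟩⟩, MorphismProperty.mk_propFunctor_obj_le_two _ _ _⟩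

theorem stmt_9 (n : ℕ) (hn : 2 ≤ n) :
    ∃ F : ObjectProperty.FullSubcategory (fun X : Type => Nonempty X ∧ Cardinal.mk X ≤ n) ⥤
          ObjectProperty.FullSubcategory (fun X : Type => Nonempty X ∧ Cardinal.mk X ≤ 2),
      ∀ d, IsEmpty (F ≅
        (Functor.const (ObjectProperty.FullSubcategory (fun X : Type => Nonempty X ∧ Cardinal.mk X ≤ n))).obj d) := by
  have : Nontrivial (Fin n) := Fin.nontrivial_iff_two_le.2 hn
  let A : SetsCardLE n := ⟨Fin n, ⟨⟨0, by omega⟩⟩, (mk_fin n).le⟩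
  let c : A ⟶ A := ObjectProperty.homMk (TypeCat.ofHom fun _ => ⟨0, by omega⟩)
  have hA : bijectiveFromCard n (𝟙 A) := ⟨mk_fin n, Function.bijective_id⟩
  have hc : ¬ bijectiveFromCard n c := fun h => Function.not_injective_const h.2.injective
  refine ⟨bijectiveFromCardFunctor n, fun d => ⟨fun e => ?_⟩⟩
  have h := congrArg InducedCategory.Hom.hom (Functor.map_eq_id_of_iso_const e c)
  exact MorphismProperty.propFunctor_map_ne_id _ bijectiveFromCard_comp_iff hA hc h
end

section
/- Let F be a subfunctor of the identity functor on the category of groups such that F(ℤ) = ℤ. Then F(G) = G for all groups G, i.e., F is the identity functor. -/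
open CategoryTheory

/-- A subfunctor of the identity functor on the category of groups. -/
structure GrpIdSubfunctor : Type 1 where
  sub : ∀ G : GrpCat.{0}, Subgroup G
  map_le : ∀ {G H : GrpCat.{0}} (φ : G ⟶ H), (sub G).map φ.hom ≤ sub H

theorem GrpIdSubfunctor.map_mem (F : GrpIdSubfunctor) {G H : GrpCat.{0}} (φ : G ⟶ H) {x : G}
    (hx : x ∈ F.sub G) : φ x ∈ F.sub H :=
  F.map_le φ ⟨x, hx, rfl⟩

theorem stmt_14 (F : GrpIdSubfunctor)
    (hZ : F.sub (GrpCat.of (Multiplicative ℤ)) = ⊤) :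
    ∀ G : GrpCat.{0}, F.sub G = ⊤ := by
  intro G
  refine eq_top_iff.mpr fun g _ => ?_
  -- `g` is the image of the generator of `ℤ` under `n ↦ g ^ n`.
  have hgen : Multiplicative.ofAdd (1 : ℤ) ∈ F.sub (GrpCat.of (Multiplicative ℤ)) :=
    hZ ▸ Subgroup.mem_top _
  simpa using F.map_mem (GrpCat.ofHom (zpowersHom G g)) hgen
end

section
/- Let Q be a quotient of the identity functor on the category of groups (so Q(G) = G/F(G) for a subfunctor F of the identity) such that Q is non-trivial, i.e., Q(G₀) ≠ 1 for some group G₀. Then the essential image of Q contains either a non-trivial finite cyclic group or all free abelian groups ℤ^{⊕X} for every set X. -/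
/-!
Test `F` on the infinite cyclic group: `F(ℤ) = nℤ` for some `n : ℕ`.
If `n = 1`, every element of every group is the image of `1 ∈ F(ℤ)` under a homomorphism
`ℤ → G`, so `F(G) = G` for all `G`, i.e. `Q` is trivial. If `n ≥ 2`, `ℤ ↠ ℤ/n` exhibits `ℤ/n`
in the image. If `n = 0`, the coordinate maps `ℤ^{⊕X} → ℤ` send `F(ℤ^{⊕X})` into `F(ℤ) = 0`,
and they separate points, so `F(ℤ^{⊕X}) = 0` and `ℤ^{⊕X} = Q(ℤ^{⊕X})`.
-/

open CategoryTheory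

/-- `H` is in the essential image of the quotient functor `G ↦ G / F(G)`:
there is a surjection `G ↠ H` whose kernel is exactly `F(G)`. -/
def InQuotientImage (F : GrpIdSubfunctor) (H : GrpCat.{0}) : Prop :=
  ∃ (G : GrpCat.{0}) (φ : G ⟶ H),
    Function.Surjective φ ∧ MonoidHom.ker φ.hom = F.sub G

theorem Subgroup.exists_eq_toSubgroup_zmultiples_natCast (H : Subgroup (Multiplicative ℤ)) :
    ∃ n : ℕ, H = AddSubgroup.toSubgroup (AddSubgroup.zmultiples (n : ℤ)) := by
  obtain ⟨a, ha⟩ := Int.subgroup_cyclic (AddSubgroup.toSubgroup.symm H)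
  refine ⟨a.natAbs, AddSubgroup.toSubgroup.symm_apply_eq.mp ?_⟩
  rw [ha, ← AddSubgroup.zmultiples_eq_closure, Int.zmultiples_natAbs]

theorem FreeAbelianGroup.exists_apply_ne_zero {X : Type*} {x : FreeAbelianGroup X} (hx : x ≠ 0) :
    ∃ f : FreeAbelianGroup X →+ ℤ, f x ≠ 0 := by
  obtain ⟨i, hi⟩ : ∃ i, equivFinsupp X x i ≠ 0 := by
    by_contra! h
    exact hx ((equivFinsupp X).map_eq_zero_iff.mp (Finsupp.ext h))
  exact ⟨(Finsupp.applyAddHom i).comp (equivFinsupp X).toAddMonoidHom, hi⟩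

namespace GrpIdSubfunctor

variable (F : GrpIdSubfunctor)

theorem map_mem_s18 {G H : Type} [Group G] [Group H] (f : G →* H) {x : G}
    (hx : x ∈ F.sub (GrpCat.of G)) : f x ∈ F.sub (GrpCat.of H) :=
  F.map_le (GrpCat.ofHom f) (Subgroup.mem_map_of_mem _ hx)

theorem sub_eq_top_of_sub_int_eq_top (h : F.sub (GrpCat.of (Multiplicative ℤ)) = ⊤)
    (G : Type) [Group G] : F.sub (GrpCat.of G) = ⊤ := by
  refine eq_top_iff.mpr fun g _ => ?_
  have h1 : Multiplicative.ofAdd (1 : ℤ) ∈ F.sub (GrpCat.of (Multiplicative ℤ)) := h ▸ trivial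
  simpa using F.map_mem_s18 (zpowersHom G g) h1

theorem sub_eq_bot_of_separating {G K : Type} [Group G] [Group K]
    (hK : F.sub (GrpCat.of K) = ⊥) (hsep : ∀ x : G, x ≠ 1 → ∃ f : G →* K, f x ≠ 1) :
    F.sub (GrpCat.of G) = ⊥ := by
  refine eq_bot_iff.mpr fun x hx => Subgroup.mem_bot.mpr ?_
  by_contra hx1
  obtain ⟨f, hf⟩ := hsep x hx1
  exact hf (Subgroup.mem_bot.mp (hK ▸ F.map_mem_s18 f hx))

theorem sub_freeAbelianGroup_eq_bot (h : F.sub (GrpCat.of (Multiplicative ℤ)) = ⊥) (X : Type) :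
    F.sub (GrpCat.of (Multiplicative (FreeAbelianGroup X))) = ⊥ :=
  F.sub_eq_bot_of_separating h fun _ hx =>
    let ⟨f, hf⟩ := FreeAbelianGroup.exists_apply_ne_zero hx
    ⟨f.toMultiplicative, hf⟩

theorem inQuotientImage_of_sub_eq_bot {G : GrpCat.{0}} (h : F.sub G = ⊥) :
    InQuotientImage F G :=
  ⟨G, 𝟙 G, Function.surjective_id, h.symm ▸ rfl⟩

theorem inQuotientImage_zmod {n : ℕ}
    (h : F.sub (GrpCat.of (Multiplicative ℤ)) =
      AddSubgroup.toSubgroup (AddSubgroup.zmultiples (n : ℤ))) :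
    InQuotientImage F (GrpCat.of (Multiplicative (ZMod n))) :=
  ⟨_, GrpCat.ofHom (Int.castAddHom (ZMod n)).toMultiplicative, ZMod.intCast_surjective,
    by rw [h, ← ZMod.ker_intCastAddHom]; rfl⟩

end GrpIdSubfunctor

theorem stmt_18 (F : GrpIdSubfunctor) (G₀ : GrpCat.{0}) (hQ : F.sub G₀ ≠ ⊤) :
    (∃ n : ℕ, 1 < n ∧ InQuotientImage F (GrpCat.of (Multiplicative (ZMod n)))) ∨
    (∀ X : Type, InQuotientImage F (GrpCat.of (Multiplicative (FreeAbelianGroup X)))) := by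
  obtain ⟨n, hn⟩ := (F.sub (GrpCat.of (Multiplicative ℤ))).exists_eq_toSubgroup_zmultiples_natCast
  match n, hn with
  | 0, hn =>
    right
    intro X
    refine F.inQuotientImage_of_sub_eq_bot (F.sub_freeAbelianGroup_eq_bot ?_ X)
    simpa using hn
  | 1, hn =>
    refine absurd (F.sub_eq_top_of_sub_int_eq_top ?_ G₀) hQ
    simpa [Int.zmultiples_one] using hn
  | n + 2, hn => exact .inl ⟨n + 2, by omega, F.inQuotientImage_zmod hn⟩
end

section
/- Let F be a subfunctor of the identity functor on the category of abelian groups such that F(A) is torsion-free for every abelian group A, or such that Q(A) = A/F(A) is divisible for every A with Q non-trivial. In the first case F is trivial: F(A) = 0 for all abelian groups A. -/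
open CategoryTheory

universe u

/-- Old Mathlib's `AddMonoid.IsTorsionFree` (removed): every nonzero element has infinite order. -/
def AddMonoid.IsTorsionFree (G : Type*) [AddMonoid G] : Prop :=
  ∀ g : G, g ≠ 0 → ¬IsOfFinAddOrder g

/-- A subfunctor of the identity functor on the category of abelian groups. -/
structure AbIdSubfunctor : Type (u + 1) where
  sub : ∀ A : AddCommGrpCat.{u}, AddSubgroup A
  map_le : ∀ {A B : AddCommGrpCat.{u}} (φ : A ⟶ B), (sub A).map φ.hom ≤ sub B

/-!
If `0 ≠ a ∈ F(A)`, push `a` into `A ⧸ ⟨2a⟩`. Its image lies in `F(A ⧸ ⟨2a⟩)` and is killed by `2`,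
so torsion-freeness forces it to vanish, i.e. `a = k • 2a` for some `k`. Then `(2k - 1) • a = 0`
with `2k - 1 ≠ 0`, so `a` is a torsion element of `F(A)`, a contradiction.
-/

theorem AddSubgroup.eq_zero_of_isTorsionFree_of_isOfFinAddOrder {G : Type*} [AddGroup G]
    {S : AddSubgroup G} (hS : AddMonoid.IsTorsionFree S) {x : G} (hxS : x ∈ S)
    (hx : IsOfFinAddOrder x) : x = 0 := by
  by_contra hne
  exact hS ⟨x, hxS⟩ (by simpa using hne)
    (AddSubmonoid.isOfFinAddOrder_coe (H := S.toAddSubmonoid).mp hx)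

theorem isOfFinAddOrder_of_mem_zmultiples_zsmul {G : Type*} [AddCommGroup G] {a : G} {n : ℤ}
    (hn : ¬IsUnit n) (ha : a ∈ AddSubgroup.zmultiples (n • a)) : IsOfFinAddOrder a := by
  obtain ⟨k, hk⟩ := ha
  refine isOfFinAddOrder_iff_zsmul_eq_zero.mpr ⟨k * n - 1, ?_, ?_⟩
  · intro h
    exact hn (IsUnit.of_mul_eq_one_right k (sub_eq_zero.mp h))
  · simp only at hk
    rw [sub_smul, mul_smul, hk, one_smul, sub_self]

theorem AbIdSubfunctor.map_mem (F : AbIdSubfunctor.{u}) {A B : AddCommGrpCat.{u}} (φ : A ⟶ B)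
    {a : A} (ha : a ∈ F.sub A) : φ a ∈ F.sub B :=
  F.map_le φ ⟨a, ha, rfl⟩

theorem stmt_19 (F : AbIdSubfunctor.{u})
    (htf : ∀ A : AddCommGrpCat.{u}, AddMonoid.IsTorsionFree (F.sub A)) :
    ∀ A : AddCommGrpCat.{u}, F.sub A = ⊥ := by
  intro A
  refine (AddSubgroup.eq_bot_iff_forall _).mpr fun a ha => ?_
  let B := AddSubgroup.zmultiples ((2 : ℤ) • a)
  let π : A ⟶ AddCommGrpCat.of (A ⧸ B) := AddCommGrpCat.ofHom (QuotientAddGroup.mk' B)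
  have hπa_tors : IsOfFinAddOrder (π a) := by
    refine isOfFinAddOrder_iff_zsmul_eq_zero.mpr ⟨2, two_ne_zero, ?_⟩
    rw [← map_zsmul]
    exact (QuotientAddGroup.eq_zero_iff _).mpr (AddSubgroup.mem_zmultiples _)
  have hπa : π a = 0 :=
    AddSubgroup.eq_zero_of_isTorsionFree_of_isOfFinAddOrder (htf _) (F.map_mem π ha) hπa_tors
  have haB : a ∈ B := (QuotientAddGroup.eq_zero_iff _).mp hπa
  exact AddSubgroup.eq_zero_of_isTorsionFree_of_isOfFinAddOrder (htf A) ha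
    (isOfFinAddOrder_of_mem_zmultiples_zsmul (by decide) haB)
end
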